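/- Let $z : [0,T] \to \mathbb{R}^n$ be weakly controlled by an $\alpha$-Hölder path $\zeta : [0,T] \to \mathbb{R}^d$ with decomposition $\delta z_{st} = z_s^\zeta \delta\zeta_{st} + \rho_{st}$, $\|\rho\|_{2\kappa} < \infty$, $z^\zeta \in \mathcal{C}^\kappa$, and suppose $2\kappa > \alpha$... Suppose also $\delta z_{st} = \tilde{z}_s^\zeta \delta\zeta_{st} + \tilde\rho_{st}$ is another such decomposition, and that $\zeta$ is 'truly rough' in the sense that for every $s \in [0,T)$ and every nonzero row vector $v \in \mathbb{R}^{1\times d}$, $\limsup_{t \downarrow s} |v\,\delta\zeta_{st}|/|t-s|^{2\kappa} = \infty$. Then $z^\zeta = \tilde{z}^\zeta$ on $[0,T)$. -/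
import Mathlib


/-- Uniqueness of the Gubinelli derivative when the driving path is truly rough:
if `δz_{st} = Z₁ₛ δζ_{st} + ρ¹_{st} = Z₂ₛ δζ_{st} + ρ²_{st}` with remainders of order
`(t-s)^{2κ}`, and for every `s ∈ [0,T)` and nonzero row vector `v` the quantity
`|v·δζ_{st}|/(t-s)^{2κ}` has limsup `∞` as `t ↓ s`, then `Z₁ = Z₂` on `[0,T)`. -/
theorem gubinelli_derivative_unique (T α κ C : ℝ) (hT : 0 < T) (hκ : 0 < κ)
    (hκα : α < 2 * κ) (d n : ℕ)
    (ζ : ℝ → Fin d → ℝ) (Hζ : ℝ)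
    (hζHolder : ∀ s t, 0 ≤ s → s ≤ t → t ≤ T → ‖ζ t - ζ s‖ ≤ Hζ * (t - s) ^ α)
    (z : ℝ → Fin n → ℝ)
    (Z1 Z2 : ℝ → ((Fin d → ℝ) →L[ℝ] (Fin n → ℝ)))
    (ρ1 ρ2 : ℝ → ℝ → Fin n → ℝ)
    (hdecomp1 : ∀ s t, 0 ≤ s → s ≤ t → t ≤ T → z t - z s = Z1 s (ζ t - ζ s) + ρ1 s t)
    (hρ1 : ∀ s t, 0 ≤ s → s ≤ t → t ≤ T → ‖ρ1 s t‖ ≤ C * (t - s) ^ (2 * κ))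
    (hdecomp2 : ∀ s t, 0 ≤ s → s ≤ t → t ≤ T → z t - z s = Z2 s (ζ t - ζ s) + ρ2 s t)
    (hρ2 : ∀ s t, 0 ≤ s → s ≤ t → t ≤ T → ‖ρ2 s t‖ ≤ C * (t - s) ^ (2 * κ))
    (hrough : ∀ s, 0 ≤ s → s < T → ∀ v : Fin d → ℝ, v ≠ 0 →
      ∀ M : ℝ, ∀ ε > (0 : ℝ), ∃ t, s < t ∧ t ≤ T ∧ t - s < ε ∧
        M * (t - s) ^ (2 * κ) ≤ |∑ j, v j * (ζ t j - ζ s j)|) :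
    ∀ s, 0 ≤ s → s < T → Z1 s = Z2 s := by
  intro s hs hsT
  by_contra hne
  set L := Z1 s - Z2 s with hLdef
  have hL : L ≠ 0 := sub_ne_zero.mpr hne
  obtain ⟨x, hx⟩ : ∃ x, L x ≠ 0 := by
    by_contra h
    push_neg at h
    exact hL (ContinuousLinearMap.ext fun x => by simpa using h x)
  obtain ⟨i, hi⟩ : ∃ i, (L x) i ≠ 0 := Function.ne_iff.mp hx
  set v : Fin d → ℝ := fun j => (L (Pi.single j (1:ℝ) : Fin d → ℝ)) i with hvdef
  have key : ∀ y : Fin d → ℝ, (L y) i = ∑ j, y j * v j := by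
    intro y
    have hy : y = ∑ j, y j • (Pi.single j (1 : ℝ) : Fin d → ℝ) := by
      have := pi_eq_sum_univ y
      convert this using 2 with j
      ext k
      simp [Pi.single_apply, eq_comm]
    calc (L y) i = (L (∑ j, y j • (Pi.single j (1 : ℝ) : Fin d → ℝ))) i := by rw [← hy]
      _ = ∑ j, y j * v j := by
          rw [map_sum]
          simp [Finset.sum_apply, hvdef]
  have hv : v ≠ 0 := by
    intro h0
    apply hi
    rw [key x, h0]
    simp
  obtain ⟨t, hst, htT, _, hbig⟩ := hrough s hs hsT v hv (2 * C + 1) 1 one_pos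
  have hs_le_t : s ≤ t := le_of_lt hst
  have hLδ : L (ζ t - ζ s) = ρ2 s t - ρ1 s t := by
    have h1 := hdecomp1 s t hs hs_le_t htT
    have h2 := hdecomp2 s t hs hs_le_t htT
    have : Z1 s (ζ t - ζ s) + ρ1 s t = Z2 s (ζ t - ζ s) + ρ2 s t := by rw [← h1, ← h2]
    simp only [hLdef, ContinuousLinearMap.sub_apply]
    linear_combination (norm := module) this
  have habs : |(L (ζ t - ζ s)) i| ≤ 2 * C * (t - s) ^ (2 * κ) := by
    calc |(L (ζ t - ζ s)) i| ≤ ‖L (ζ t - ζ s)‖ := by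
          simpa using norm_le_pi_norm (L (ζ t - ζ s)) i
      _ = ‖ρ2 s t - ρ1 s t‖ := by rw [hLδ]
      _ ≤ ‖ρ2 s t‖ + ‖ρ1 s t‖ := norm_sub_le _ _
      _ ≤ C * (t - s) ^ (2 * κ) + C * (t - s) ^ (2 * κ) :=
          add_le_add (hρ2 s t hs hs_le_t htT) (hρ1 s t hs hs_le_t htT)
      _ = 2 * C * (t - s) ^ (2 * κ) := by ring
  have hsum : ∑ j, v j * (ζ t j - ζ s j) = (L (ζ t - ζ s)) i := by
    rw [key (ζ t - ζ s)]
    simp [mul_comm]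
  rw [hsum] at hbig
  have hpow : (0 : ℝ) < (t - s) ^ (2 * κ) :=
    Real.rpow_pos_of_pos (sub_pos.mpr hst) _
  nlinarith [le_trans hbig habs]
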